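/- The difference operators realize the Cartan-weight relations of U_q(gl(N)): for all 1 ≤ n ≤ N and 1 ≤ m ≤ N−1, ϱ(K_n) ϱ(E_{m,m+1}) ϱ(K_n)^{−1} = q^{δ_{nm} − δ_{n,m+1}} · ϱ(E_{m,m+1}) and ϱ(K_n) ϱ(E_{m+1,m}) ϱ(K_n)^{−1} = q^{δ_{n,m+1} − δ_{nm}} · ϱ(E_{m+1,m}), and the operators ϱ(K_1),…,ϱ(K_N) pairwise commute. All identities hold applied to any function f at every point γ at which all sinh-denominators occurring on either side (including those at shifted arguments) are nonzero. -/
import Mathlib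


noncomputable section

open Finset

/-- A point of the variable space: an assignment of a complex number to each
index pair `(n, j)` (with `γ (N, j)` playing the role of the fixed top-level
parameters). -/
abbrev Pt : Type := ℕ × ℕ → ℂ

/-- Operators acting on functions of the variables. -/
abbrev Op : Type := (Pt → ℂ) → (Pt → ℂ)

/-- Shift the coordinate `γ (n, j)` by `c`. -/
def shift (n j : ℕ) (c : ℂ) (γ : Pt) : Pt :=
  fun p => if p = (n, j) then γ p + c else γ p

/-- The quantum deformation parameter `q = exp(2πiω₁/ω₂)`. -/
def qpar (w1 w2 : ℂ) : ℂ := Complex.exp (2 * (Real.pi : ℂ) * Complex.I * w1 / w2)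

/-- The multiplier of the Cartan operator `ϱ(K_n)`. -/
def kfac (w2 : ℂ) (n : ℕ) (γ : Pt) : ℂ :=
  Complex.exp ((2 * (Real.pi : ℂ) / w2) *
    ((∑ j ∈ Finset.Icc 1 n, γ (n, j)) - ∑ j ∈ Finset.Icc 1 (n - 1), γ (n - 1, j)))

/-- The Cartan operator `ϱ(K_n)`. -/
def qK (w2 : ℂ) (n : ℕ) : Op := fun f γ => kfac w2 n γ * f γ

/-- The inverse Cartan operator `ϱ(K_n)⁻¹`. -/
def qKinv (w2 : ℂ) (n : ℕ) : Op := fun f γ => (kfac w2 n γ)⁻¹ * f γ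

/-- The raising operator `ϱ(E_{n,n+1})`. -/
def qE (w1 w2 : ℂ) (n : ℕ) : Op := fun f γ =>
  (2 * Complex.I * Complex.exp ((Real.pi : ℂ) * Complex.I * w1 * ((n : ℂ) - 1) / w2) /
      Complex.sin (2 * (Real.pi : ℂ) * w1 / w2)) *
    ∑ j ∈ Finset.Icc 1 n,
      ((∏ r ∈ Finset.Icc 1 (n + 1),
            Complex.sinh ((2 * (Real.pi : ℂ) / w2) *
              (γ (n, j) - γ (n + 1, r) - Complex.I * w1 / 2))) /
          ∏ s ∈ (Finset.Icc 1 n).erase j,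
            Complex.sinh ((2 * (Real.pi : ℂ) / w2) * (γ (n, j) - γ (n, s)))) *
        f (shift n j (-(Complex.I * w1)) γ)

/-- The lowering operator `ϱ(E_{n+1,n})`. -/
def qF (w1 w2 : ℂ) (n : ℕ) : Op := fun f γ =>
  -(Complex.I * Complex.exp (-((Real.pi : ℂ) * Complex.I * w1 * ((n : ℂ) - 1)) / w2) /
      (2 * Complex.sin (2 * (Real.pi : ℂ) * w1 / w2))) *
    ∑ j ∈ Finset.Icc 1 n,
      ((∏ r ∈ Finset.Icc 1 (n - 1),
            Complex.sinh ((2 * (Real.pi : ℂ) / w2) *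
              (γ (n, j) - γ (n - 1, r) + Complex.I * w1 / 2))) /
          ∏ s ∈ (Finset.Icc 1 n).erase j,
            Complex.sinh ((2 * (Real.pi : ℂ) / w2) * (γ (n, j) - γ (n, s)))) *
        f (shift n j (Complex.I * w1) γ)

/-- Genericity: all sinh-denominators, also at arguments shifted by `iω₁·a` with
`|a| ≤ d`, are nonzero. -/
def QGeneric (N : ℕ) (w1 w2 : ℂ) (d : ℕ) (γ : Pt) : Prop :=
  ∀ m j s, 1 ≤ m → m ≤ N → 1 ≤ j → j ≤ m → 1 ≤ s → s ≤ m → j ≠ s →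
    ∀ a : ℤ, a.natAbs ≤ d →
      Complex.sinh ((2 * (Real.pi : ℂ) / w2) *
        (γ (m, j) - γ (m, s) + Complex.I * w1 * (a : ℂ))) ≠ 0

lemma sum_shift (m j : ℕ) (c : ℂ) (γ : Pt) (n : ℕ) (s : Finset ℕ) :
    ∑ k ∈ s, shift m j c γ (n, k) =
      (∑ k ∈ s, γ (n, k)) + if n = m ∧ j ∈ s then c else 0 := by
  have h : ∀ k, shift m j c γ (n, k) = γ (n, k) + if n = m ∧ k = j then c else 0 := by
    intro k
    simp only [shift, Prod.mk.injEq]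
    split_ifs <;> ring
  rw [Finset.sum_congr rfl (fun k _ => h k), Finset.sum_add_distrib]
  congr 1
  by_cases hn : n = m
  · simp only [hn, true_and]
    exact Finset.sum_ite_eq' s j (fun _ => c)
  · simp [hn]

lemma kfac_shift (w2 : ℂ) (n m j : ℕ) (hn : 1 ≤ n) (hj1 : 1 ≤ j) (hjm : j ≤ m)
    (c : ℂ) (γ : Pt) :
    kfac w2 n (shift m j c γ) =
      kfac w2 n γ * Complex.exp ((2 * (Real.pi : ℂ) / w2) * c *
        ((if n = m then 1 else 0) - (if n = m + 1 then 1 else 0))) := by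
  unfold kfac
  rw [sum_shift, sum_shift, ← Complex.exp_add]
  congr 1
  have e1 : (if n = m ∧ j ∈ Finset.Icc 1 n then c else 0) = if n = m then c else 0 := by
    by_cases h : n = m
    · have : j ≤ n := by omega
      simp [h, Finset.mem_Icc, hj1, hjm, this]
    · simp [h]
  have e2 : (if n - 1 = m ∧ j ∈ Finset.Icc 1 (n - 1) then c else 0) =
      if n = m + 1 then c else 0 := by
    by_cases h : n = m + 1
    · have h' : n - 1 = m := by omega
      have : j ≤ n - 1 := by omega
      simp [h, h', Finset.mem_Icc, hj1, hjm, this]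
    · have h' : n - 1 ≠ m := by omega
      simp [h, h']
  rw [e1, e2]
  split_ifs <;> ring

lemma ratioE (w1 w2 : ℂ) (n m j : ℕ) (hn : 1 ≤ n) (hj1 : 1 ≤ j) (hjm : j ≤ m) (γ : Pt) :
    kfac w2 n γ * (kfac w2 n (shift m j (-(Complex.I * w1)) γ))⁻¹ =
      qpar w1 w2 ^ (((if n = m then 1 else 0) - (if n = m + 1 then 1 else 0) : ℤ)) := by
  rw [kfac_shift w2 n m j hn hj1 hjm, mul_inv, ← mul_assoc,
    mul_inv_cancel₀ (show kfac w2 n γ ≠ 0 from Complex.exp_ne_zero _), one_mul, ← Complex.exp_neg]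
  simp only [qpar]
  rw [← Complex.exp_int_mul]
  congr 1
  push_cast [apply_ite (Int.cast : ℤ → ℂ)]
  split_ifs <;> ring

lemma ratioF (w1 w2 : ℂ) (n m j : ℕ) (hn : 1 ≤ n) (hj1 : 1 ≤ j) (hjm : j ≤ m) (γ : Pt) :
    kfac w2 n γ * (kfac w2 n (shift m j (Complex.I * w1) γ))⁻¹ =
      qpar w1 w2 ^ (((if n = m + 1 then 1 else 0) - (if n = m then 1 else 0) : ℤ)) := by
  rw [kfac_shift w2 n m j hn hj1 hjm, mul_inv, ← mul_assoc,
    mul_inv_cancel₀ (show kfac w2 n γ ≠ 0 from Complex.exp_ne_zero _), one_mul, ← Complex.exp_neg]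
  simp only [qpar]
  rw [← Complex.exp_int_mul]
  congr 1
  push_cast [apply_ite (Int.cast : ℤ → ℂ)]
  split_ifs <;> ring

lemma pull (c Q P : ℂ) (s : Finset ℕ) (A g k : ℕ → ℂ)
    (h : ∀ j ∈ s, c * k j = Q) :
    c * (P * ∑ j ∈ s, A j * (k j * g j)) = Q * (P * ∑ j ∈ s, A j * g j) := by
  have hs : ∑ j ∈ s, A j * (k j * g j) * c = ∑ j ∈ s, A j * g j * Q :=
    Finset.sum_congr rfl fun j hj => by rw [← h j hj]; ring
  calc c * (P * ∑ j ∈ s, A j * (k j * g j))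
      = P * ((∑ j ∈ s, A j * (k j * g j)) * c) := by ring
    _ = P * (∑ j ∈ s, A j * (k j * g j) * c) := by rw [Finset.sum_mul]
    _ = P * (∑ j ∈ s, A j * g j * Q) := by rw [hs]
    _ = P * ((∑ j ∈ s, A j * g j) * Q) := by rw [Finset.sum_mul]
    _ = Q * (P * ∑ j ∈ s, A j * g j) := by ring

/-- the Cartan-weight relations of `U_q(gl(N))`:
`ϱ(K_n) ϱ(E_{m,m+1}) ϱ(K_n)⁻¹ = q^{δ_{nm} − δ_{n,m+1}} ϱ(E_{m,m+1})`,
`ϱ(K_n) ϱ(E_{m+1,m}) ϱ(K_n)⁻¹ = q^{δ_{n,m+1} − δ_{nm}} ϱ(E_{m+1,m})`, and the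
operators `ϱ(K_1), …, ϱ(K_N)` pairwise commute, pointwise wherever all
sinh-denominators involved are nonzero. -/
theorem uq_cartan_weight (N : ℕ) (hN : 2 ≤ N) (w1 w2 : ℂ) (h1 : w1 ≠ 0) (h2 : w2 ≠ 0)
    (hsin : Complex.sin (2 * (Real.pi : ℂ) * w1 / w2) ≠ 0)
    (f : Pt → ℂ) (γ : Pt) (hγ : QGeneric N w1 w2 1 γ) :
    (∀ n m, 1 ≤ n → n ≤ N → 1 ≤ m → m ≤ N - 1 →
      qK w2 n (qE w1 w2 m (qKinv w2 n f)) γ =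
        qpar w1 w2 ^ (((if n = m then 1 else 0) - (if n = m + 1 then 1 else 0) : ℤ)) *
          qE w1 w2 m f γ ∧
      qK w2 n (qF w1 w2 m (qKinv w2 n f)) γ =
        qpar w1 w2 ^ (((if n = m + 1 then 1 else 0) - (if n = m then 1 else 0) : ℤ)) *
          qF w1 w2 m f γ) ∧
    (∀ n m, 1 ≤ n → n ≤ N → 1 ≤ m → m ≤ N →
      qK w2 n (qK w2 m f) γ = qK w2 m (qK w2 n f) γ) := by
  constructor
  · intro n m hn1 hnN hm1 hmN
    constructor
    · simp only [qK, qE, qKinv]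
      exact pull _ _ _ _ _ _ _ (fun j hj => by
        obtain ⟨hj1, hjm⟩ := Finset.mem_Icc.mp hj
        exact ratioE w1 w2 n m j hn1 hj1 hjm γ)
    · simp only [qK, qF, qKinv]
      exact pull _ _ _ _ _ _ _ (fun j hj => by
        obtain ⟨hj1, hjm⟩ := Finset.mem_Icc.mp hj
        exact ratioF w1 w2 n m j hn1 hj1 hjm γ)
  · intro n m _ _ _ _
    simp only [qK]
    ring
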